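/- Let j ∈ [J] and v ∈ W^j. Assume conditions (C1) and (C3). Then there exists ε > 0 such that B(v,ε) ⊆ W^j, and such that for every j' ∈ {0,1,…,J} with j' ≠ j and every t ∈ [0,1], B(tv, ε) ∩ W^{j'} = ∅. -/

import Mathlib

/-!
The segment `{t • v : t ∈ [0, 1]}` is compact and lies in the open set `B(0, δ) ∪ cone (W j)`:
its point `0` lies in the ball, all others in the cone. By (C3) this open set misses `W0` and
every other `W j'`, so a uniform neighbourhood of the segment does too.
-/

open Set Topology Metric

noncomputable section

namespace Paper

abbrev Vec (d : ℕ) := EuclideanSpace ℝ (Fin d)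

/-- The cone generated by a set: `{λ x : λ > 0, x ∈ A}`. -/
def cone {d : ℕ} (A : Set (Vec d)) : Set (Vec d) :=
  {y | ∃ l : ℝ, 0 < l ∧ ∃ x ∈ A, y = l • x}

section Cone

variable {d : ℕ}

lemma subset_cone (A : Set (Vec d)) : A ⊆ cone A :=
  fun x hx => ⟨1, one_pos, x, hx, (one_smul ℝ x).symm⟩

open Pointwise in
lemma isOpen_cone {A : Set (Vec d)} (hA : IsOpen A) : IsOpen (cone A) := by
  have hcone : cone A = ⋃ l : {l : ℝ // 0 < l}, l.1 • A := by
    ext y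
    simp only [cone, mem_iUnion, mem_smul_set, mem_ofPred_eq, Subtype.exists, exists_prop]
    grind
  rw [hcone]
  exact isOpen_iUnion fun l => hA.smul₀ l.2.ne'

lemma smul_mem_ball_union_cone {A : Set (Vec d)} {v : Vec d} (hv : v ∈ A) {δ t : ℝ}
    (hδ : 0 < δ) (ht : 0 ≤ t) : t • v ∈ ball 0 δ ∪ cone A := by
  rcases ht.eq_or_lt with rfl | ht
  · exact Or.inl (by simpa using hδ)
  · exact Or.inr ⟨t, ht, v, hv, rfl⟩

lemma ball_union_cone_inter_eq_empty {A S : Set (Vec d)} {δ : ℝ}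
    (hball : ball 0 δ ∩ S = ∅) (hcone : cone S ∩ cone A = ∅) :
    (ball 0 δ ∪ cone A) ∩ S = ∅ := by
  rw [union_inter_distrib_right, hball, empty_union, inter_comm]
  exact subset_eq_empty (inter_subset_inter_left _ (subset_cone S)) hcone

end Cone

theorem statement16_general
    {d J : ℕ} (W0 : Set (Vec d)) (W : Fin J → Set (Vec d))
    (hWopen : ∀ j, IsOpen (W j))
    (hC3a : ∀ j j', j ≠ j' → cone (W j) ∩ cone (W j') = ∅)
    (hC3b : ∀ j, cone W0 ∩ cone (W j) = ∅)
    (hC3c : ∃ δ > (0 : ℝ), Metric.ball (0 : Vec d) δ ∩ W0 = ∅ ∧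
      ∀ j, Metric.ball (0 : Vec d) δ ∩ W j = ∅)
    (j : Fin J) (v : Vec d) (hv : v ∈ W j) :
    ∃ ε > (0 : ℝ), Metric.ball v ε ⊆ W j ∧
      ∀ t ∈ Set.Icc (0 : ℝ) 1,
        Metric.ball (t • v) ε ∩ W0 = ∅ ∧
        ∀ j' : Fin J, j' ≠ j → Metric.ball (t • v) ε ∩ W j' = ∅ := by
  obtain ⟨δ, hδ, hW0δ, hWδ⟩ := hC3c
  set U := ball (0 : Vec d) δ ∪ cone (W j)
  have hsegment : (· • v) '' Icc (0 : ℝ) 1 ⊆ U := by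
    rintro _ ⟨t, ht, rfl⟩
    exact smul_mem_ball_union_cone hv hδ ht.1
  obtain ⟨ε, hε, hεU⟩ := (isCompact_Icc.image (by fun_prop)).exists_thickening_subset_open
    (isOpen_ball.union (isOpen_cone (hWopen j))) hsegment
  obtain ⟨r, hr, hrW⟩ := Metric.isOpen_iff.1 (hWopen j) v hv
  refine ⟨min ε r, lt_min hε hr, (ball_subset_ball (min_le_right _ _)).trans hrW,
    fun t ht => ?_⟩
  have hball : ball (t • v) (min ε r) ⊆ U :=
    (ball_subset_ball (min_le_left _ _)).trans
      ((ball_subset_thickening (mem_image_of_mem (· • v) ht) ε).trans hεU)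
  exact ⟨subset_eq_empty (inter_subset_inter_left _ hball)
      (ball_union_cone_inter_eq_empty hW0δ (hC3b j)),
    fun j' hj' => subset_eq_empty (inter_subset_inter_left _ hball)
      (ball_union_cone_inter_eq_empty (hWδ j') (hC3a j' j hj'))⟩

theorem statement16
    {d J : ℕ} (W0 : Set (Vec d)) (W : Fin J → Set (Vec d)) (m : Vec d)
    (hW0open : IsOpen W0) (hWopen : ∀ j, IsOpen (W j)) (hWconv : ∀ j, Convex ℝ (W j))
    (hdisj0 : ∀ j, Disjoint W0 (W j))
    (hdisj : ∀ j j', j ≠ j' → Disjoint (W j) (W j'))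
    (hC1 : ∃ δ > (0 : ℝ), ∀ j, cone (Metric.ball m δ) ∩ W j = ∅)
    (hC3a : ∀ j j', j ≠ j' → cone (W j) ∩ cone (W j') = ∅)
    (hC3b : ∀ j, cone W0 ∩ cone (W j) = ∅)
    (hC3c : ∃ δ > (0 : ℝ), Metric.ball (0 : Vec d) δ ∩ W0 = ∅ ∧
      ∀ j, Metric.ball (0 : Vec d) δ ∩ W j = ∅)
    (j : Fin J) (v : Vec d) (hv : v ∈ W j) :
    ∃ ε > (0 : ℝ), Metric.ball v ε ⊆ W j ∧
      ∀ t ∈ Set.Icc (0 : ℝ) 1,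
        Metric.ball (t • v) ε ∩ W0 = ∅ ∧
        ∀ j' : Fin J, j' ≠ j → Metric.ball (t • v) ε ∩ W j' = ∅ :=
  statement16_general W0 W hWopen hC3a hC3b hC3c j v hv

end Paper
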